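/- arXiv:2312.02421 — 2 statements merged into one kernel-verified Lean document; each statement's English description precedes it below -/
import Mathlib

section
/- Let N ≥ 1 be an integer, λ₁, …, λ_N real numbers, r₁ > r₂ > ⋯ > r_N > 0, and n a positive integer. Then for each i = 1, …, N, the i-th entry of the vector adj(M_N^{(n)}) · e equals (−1)^{N−i} · (∏_{j=1}^{i−1} (−2λ_j + 1)) · K_N^{i,i+1}(n), where adj denotes the adjugate matrix and e ∈ ℝ^N is the all-ones column vector. -/
/-!
By Cramer's rule the `i`-th entry of `adj(M) e` is the determinant of `M` with column `i` replaced
by `e`. Subtracting the last row from all the others turns that column into the last unit vector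
and row `q < N` into the row indexed by `q` of the matrices `K_N^{·,·}(n)`: zero left of the
diagonal and `-2λ_q + 1` on it. Expanding along column `i` deletes the last row at the cost of the
sign `(-1)^{N-i}`, and leaves a block upper triangular matrix: an upper triangular block with
diagonal `-2λ_j + 1` (`j < i`), and the matrix of `K_N^{i,i+1}(n)`.
-/

open Matrix

/-- The `n`-order generalized polarization matrix `M_N^{(n)}` of an `N`-layer concentric
disk structure: diagonal entries `-2λ_i`, entries `(r_j/r_i)^{2n}` above the diagonal and
`-1` below it (indices shifted by one, from `Fin N` to `{1, …, N}`). -/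
noncomputable def GPM (N : ℕ) (lam r : ℕ → ℝ) (n : ℕ) : Matrix (Fin N) (Fin N) ℝ :=
  Matrix.of fun i j =>
    if i = j then -2 * lam ((i : ℕ) + 1)
    else if i < j then (r ((j : ℕ) + 1) / r ((i : ℕ) + 1)) ^ (2 * n)
    else -1

/-- `t_{p,q} = (r_q / r_p)^{2n}`. -/
noncomputable def tpow (r : ℕ → ℝ) (n p q : ℕ) : ℝ := (r q / r p) ^ (2 * n)

/-- The `(N-j+1) × (N-j+1)` matrix whose determinant is `K_N^{i,j}(n)`. -/
noncomputable def Kmat (N : ℕ) (lam r : ℕ → ℝ) (n i j : ℕ) :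
    Matrix (Fin (N - j + 1)) (Fin (N - j + 1)) ℝ :=
  Matrix.of fun p c =>
    let m := j + (c : ℕ)
    if (p : ℕ) = 0 then
      if m = N then tpow r n i N + 2 * lam N else tpow r n i m + 1
    else
      let q := j + (p : ℕ) - 1
      if m < q then 0
      else if m = q then -2 * lam q + 1
      else if m = N then tpow r n q N + 2 * lam N
      else tpow r n q m + 1

/-- `K_N^{i,j}(n)` for `j ≤ N`, with the convention `K_N^{i,N+1}(n) = 1`. -/
noncomputable def Kdet (N : ℕ) (lam r : ℕ → ℝ) (n i j : ℕ) : ℝ :=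
  if j ≤ N then (Kmat N lam r n i j).det else 1

theorem Fin.prod_univ_eq_prod_Icc_one {M : Type*} [CommMonoid M] (f : ℕ → M) (k : ℕ) :
    ∏ p : Fin k, f (p + 1) = ∏ j ∈ Finset.Icc 1 k, f j := by
  rw [Fin.prod_univ_eq_prod_range (fun p => f (p + 1)), Finset.range_eq_Ico, Finset.prod_Ico_add',
    Finset.Ico_add_one_right_eq_Icc, zero_add]

namespace Matrix

variable {R : Type*} [CommRing R]

section

variable {ι : Type*} [DecidableEq ι]

theorem adjugate_mulVec_apply [Fintype ι] (A : Matrix ι ι R) (b : ι → R) (i : ι) :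
    (A.adjugate *ᵥ b) i = (A.updateCol i b).det := by
  rw [← cramer_eq_adjugate_mulVec, cramer_apply]

def subRow (A : Matrix ι ι R) (k : ι) : Matrix ι ι R :=
  of fun q m => if q = k then A q m else A q m - A k m

theorem subRow_apply_of_ne (A : Matrix ι ι R) {k q : ι} (hq : q ≠ k) (m : ι) :
    A.subRow k q m = A q m - A k m := by
  simp [subRow, hq]

theorem det_subRow [Fintype ι] (A : Matrix ι ι R) (k : ι) : (A.subRow k).det = A.det :=
  (det_eq_of_forall_row_eq_smul_add_const (fun q => if q = k then 0 else 1) k (if_pos rfl)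
    fun q m => by by_cases h : q = k <;> simp [subRow, h]).symm

theorem transpose_subRow_updateCol_const (A : Matrix ι ι R) (i k : ι) (c : R) :
    ((A.updateCol i fun _ => c).subRow k)ᵀ i = Pi.single k c := by
  ext q
  by_cases hq : q = k <;> simp [subRow, hq]

end

theorem det_succ_eq_of_col_eq_single {n : ℕ} (A : Matrix (Fin (n + 1)) (Fin (n + 1)) R)
    (i j : Fin (n + 1)) (hj : Aᵀ j = Pi.single i 1) :
    A.det = (-1) ^ ((i : ℕ) + j) * (A.submatrix i.succAbove j.succAbove).det := by
  have hA (q : Fin (n + 1)) : A q j = (Pi.single i 1 : Fin (n + 1) → R) q := congrFun hj q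
  rw [det_succ_column A j, Finset.sum_eq_single i (fun q _ hq => by simp [hA, hq]) (by simp)]
  simp [hA]

theorem det_fin_add_eq_mul_of_lower_left_eq_zero {k d : ℕ}
    (A : Matrix (Fin (k + d)) (Fin (k + d)) R)
    (h : ∀ p c, A (Fin.natAdd k p) (Fin.castAdd d c) = 0) :
    A.det = (A.submatrix (Fin.castAdd d) (Fin.castAdd d)).det *
      (A.submatrix (Fin.natAdd k) (Fin.natAdd k)).det := by
  have h₂₁ : (A.submatrix finSumFinEquiv finSumFinEquiv).toBlocks₂₁ = 0 := by
    ext p c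
    exact h p c
  rw [← det_submatrix_equiv_self finSumFinEquiv A, ← fromBlocks_toBlocks (A.submatrix _ _), h₂₁,
    det_fromBlocks_zero₂₁]
  rfl

theorem det_eq_prod_mul_det_of_col_eq_single_last {k d : ℕ}
    (E : Matrix (Fin (k + d + 1)) (Fin (k + d + 1)) R)
    (hcol : Eᵀ ⟨k, by omega⟩ = Pi.single (Fin.last _) 1)
    (htri : ∀ q m : Fin (k + d + 1), (q : ℕ) < k + d → m < q → E q m = 0) :
    E.det = (-1) ^ d * (∏ p : Fin k, E ⟨p, by omega⟩ ⟨p, by omega⟩) *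
      (of fun p c : Fin d => E ⟨k + p, by omega⟩ ⟨k + c + 1, by omega⟩).det := by
  set j : Fin (k + d + 1) := ⟨k, by omega⟩
  have hleft (c : Fin k) : j.succAbove (Fin.castAdd d c) = ⟨c, by omega⟩ := by
    rw [Fin.succAbove_of_castSucc_lt _ _ (by simp [Fin.lt_def, j])]
    rfl
  have hright (c : Fin d) : j.succAbove (Fin.natAdd k c) = ⟨k + c + 1, by omega⟩ := by
    rw [Fin.succAbove_of_le_castSucc _ _ (by simp [Fin.le_def, j])]
    rfl
  set F := E.submatrix Fin.castSucc j.succAbove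
  have hF₂₁ (p : Fin d) (c : Fin k) : F (Fin.natAdd k p) (Fin.castAdd d c) = 0 := by
    simp only [F, submatrix_apply, hleft]
    exact htri _ _ (by simp) (by simp [Fin.lt_def]; omega)
  have hF₁₁ : (F.submatrix (Fin.castAdd d) (Fin.castAdd d)).det =
      ∏ p : Fin k, E ⟨p, by omega⟩ ⟨p, by omega⟩ := by
    rw [det_of_isUpperTriangular]
    · simp only [F, submatrix_apply, hleft]
      rfl
    · intro p c hcp
      simp only [F, submatrix_apply, hleft]
      exact htri _ _ (by simp; omega) hcp
  rw [det_succ_eq_of_col_eq_single E (Fin.last _) j hcol, Fin.succAbove_last,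
    det_fin_add_eq_mul_of_lower_left_eq_zero F hF₂₁, hF₁₁, Fin.val_last,
    show k + d + k = d + 2 * k by ring, pow_add, pow_mul, neg_one_sq, one_pow, mul_one, mul_assoc]
  congr 3
  ext p c
  simp only [F, submatrix_apply, of_apply, hright]
  rfl

end Matrix

/-- The entry in column `m` of the row of `K_N^{i,j}(n)` indexed by `q` (its first row being the
one indexed by `q = i`). -/
noncomputable def Kentry (N : ℕ) (lam r : ℕ → ℝ) (n q m : ℕ) : ℝ :=
  if m < q then 0
  else if m = q then -2 * lam q + 1
  else if m = N then tpow r n q N + 2 * lam N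
  else tpow r n q m + 1

theorem Kmat_add_one_apply (N : ℕ) (lam r : ℕ → ℝ) (n i : ℕ) (p c : Fin (N - (i + 1) + 1)) :
    Kmat N lam r n i (i + 1) p c = Kentry N lam r n (i + p) (i + 1 + c) := by
  rcases Nat.eq_zero_or_pos (p : ℕ) with hp | hp
  · simp only [Kmat, Kentry, of_apply, hp, if_true, add_zero,
      if_neg (by omega : ¬ i + 1 + (c : ℕ) < i), if_neg (by omega : ¬ i + 1 + (c : ℕ) = i)]
  · simp only [Kmat, Kentry, of_apply, if_neg hp.ne', show i + 1 + (p : ℕ) - 1 = i + p by omega]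

theorem Kdet_add_one_eq_det (N : ℕ) (lam r : ℕ → ℝ) (n i d : ℕ) (hN : N = i + d) :
    Kdet N lam r n i (i + 1) =
      (of fun p c : Fin d => Kentry N lam r n (i + p) (i + 1 + c)).det := by
  rcases d with _ | d
  · rw [Kdet, if_neg (by omega), det_isEmpty]
  · have hsize : N - (i + 1) + 1 = d + 1 := by omega
    rw [Kdet, if_pos (by omega), ← det_reindex_self (finCongr hsize)]
    congr 1
    ext p c
    simp [Kmat_add_one_apply]

theorem GPM_apply_sub_GPM_last (N : ℕ) (lam r : ℕ → ℝ) (n : ℕ) {q : Fin (N + 1)}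
    (hq : (q : ℕ) < N) (m : Fin (N + 1)) :
    GPM (N + 1) lam r n q m - GPM (N + 1) lam r n (Fin.last N) m =
      Kentry (N + 1) lam r n (q + 1) (m + 1) := by
  simp only [GPM, Kentry, tpow, of_apply, Fin.ext_iff, Fin.lt_def, Fin.val_last]
  rcases (Nat.lt_succ_iff.mp m.isLt).eq_or_lt with hm | hm
  · simp only [hm]
    split_ifs <;> first | omega | ring
  · split_ifs <;> first | omega | ring

section cramer

variable (N : ℕ) (lam r : ℕ → ℝ) (n : ℕ) (i : Fin (N + 1))

theorem GPM_updateCol_subRow_apply {q m : Fin (N + 1)} (hq : (q : ℕ) < N) (hm : m ≠ i) :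
    ((GPM (N + 1) lam r n).updateCol i (fun _ => 1)).subRow (Fin.last N) q m =
      Kentry (N + 1) lam r n (q + 1) (m + 1) := by
  rw [subRow_apply_of_ne _ (Fin.ne_of_lt hq) m, updateCol_ne hm, updateCol_ne hm,
    GPM_apply_sub_GPM_last N lam r n hq]

theorem GPM_updateCol_subRow_eq_zero {q m : Fin (N + 1)} (hq : (q : ℕ) < N) (hmq : m < q) :
    ((GPM (N + 1) lam r n).updateCol i (fun _ => 1)).subRow (Fin.last N) q m = 0 := by
  by_cases hm : m = i
  · rw [hm]
    exact (congrFun (transpose_subRow_updateCol_const _ i _ 1) q).trans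
      (Pi.single_eq_of_ne (Fin.ne_of_lt hq) _)
  · rw [GPM_updateCol_subRow_apply N lam r n i hq hm, Kentry,
      if_pos (by rw [Fin.lt_def] at hmq; omega)]

end cramer

theorem adjugate_GPM_mulVec_one_general (N : ℕ) (lam r : ℕ → ℝ) (n : ℕ) :
    ∀ i : Fin N,
      ((GPM N lam r n).adjugate *ᵥ fun _ : Fin N => (1 : ℝ)) i =
        (-1 : ℝ) ^ (N - ((i : ℕ) + 1)) *
          (∏ j ∈ Finset.Icc 1 (i : ℕ), (-2 * lam j + 1)) *
            Kdet N lam r n ((i : ℕ) + 1) ((i : ℕ) + 2) := by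
  rintro ⟨k, hk⟩
  obtain ⟨d, rfl⟩ : ∃ d, N = k + d + 1 := ⟨N - k - 1, by omega⟩
  set i : Fin (k + d + 1) := ⟨k, hk⟩
  set E := ((GPM (k + d + 1) lam r n).updateCol i fun _ => 1).subRow (Fin.last _)
  have hE (q m : Fin (k + d + 1)) (hq : (q : ℕ) < k + d) (hm : (m : ℕ) ≠ k) :
      E q m = Kentry (k + d + 1) lam r n (q + 1) (m + 1) :=
    GPM_updateCol_subRow_apply _ lam r n i hq (by simpa [i, Fin.ext_iff] using hm)
  have hdiag : ∏ p : Fin k, E ⟨p, by omega⟩ ⟨p, by omega⟩ =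
      ∏ j ∈ Finset.Icc 1 k, (-2 * lam j + 1) := by
    rw [← Fin.prod_univ_eq_prod_Icc_one]
    refine Finset.prod_congr rfl fun p _ => ?_
    rw [hE _ _ (by simp; omega) (by simp; omega), Kentry, if_neg (lt_irrefl _), if_pos rfl]
  have hblock : (of fun p c : Fin d => E ⟨k + p, by omega⟩ ⟨k + c + 1, by omega⟩) =
      of fun p c : Fin d => Kentry (k + d + 1) lam r n (k + 1 + p) (k + 1 + 1 + c) := by
    ext p c
    rw [of_apply, of_apply, hE _ _ (by simp) (by simp; omega)]
    congr 1 <;> ring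
  rw [adjugate_mulVec_apply, ← det_subRow _ (Fin.last _),
    det_eq_prod_mul_det_of_col_eq_single_last E (transpose_subRow_updateCol_const _ i _ 1)
      fun q m hq hmq => GPM_updateCol_subRow_eq_zero _ lam r n i hq hmq,
    Kdet_add_one_eq_det _ lam r n (k + 1) d (by omega), hdiag, hblock,
    show k + d + 1 - (k + 1) = d by omega]

/-- The `i`-th entry of `adj(M_N^{(n)}) e` equals
`(-1)^{N-i} (∏_{j=1}^{i-1} (-2λ_j + 1)) K_N^{i,i+1}(n)`. -/
theorem adjugate_GPM_mulVec_one (N : ℕ) (hN : 1 ≤ N) (lam r : ℕ → ℝ)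
    (hr : ∀ k, 1 ≤ k → k < N → r (k + 1) < r k) (hrN : 0 < r N)
    (n : ℕ) (hn : 0 < n) :
    ∀ i : Fin N,
      ((GPM N lam r n).adjugate *ᵥ fun _ : Fin N => (1 : ℝ)) i =
        (-1 : ℝ) ^ (N - ((i : ℕ) + 1)) *
          (∏ j ∈ Finset.Icc 1 (i : ℕ), (-2 * lam j + 1)) *
            Kdet N lam r n ((i : ℕ) + 1) ((i : ℕ) + 2) :=
  adjugate_GPM_mulVec_one_general N lam r n
end

section
/- Let N ≥ 1 be an integer, λ₁, …, λ_N real numbers, r₁ > r₂ > ⋯ > r_N > 0, and n a positive integer. Then for each i = 1, …, N, the i-th entry of the row vector eᵀ Υ_N^{(n)} adj(M_N^{(n)}) equals (∏_{j=1}^{i−1} (−2λ_j − 1)) · L_N^{i,i+1}(n), where adj denotes the adjugate matrix, Υ_N^{(n)} = diag(r₁^{2n}, …, r_N^{2n}), and e ∈ ℝ^N is the all-ones column vector. -/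
open Matrix

/-- The `(N-j+2) × (N-j+2)` matrix whose determinant is `L_N^{i,j}(n)`. -/
noncomputable def Lmat (N : ℕ) (lam r : ℕ → ℝ) (n i j : ℕ) :
    Matrix (Fin (N - j + 2)) (Fin (N - j + 2)) ℝ :=
  Matrix.of fun p c =>
    if (p : ℕ) = 0 then
      if (c : ℕ) = 0 then r i ^ (2 * n) else r (j + (c : ℕ) - 1) ^ (2 * n)
    else if (p : ℕ) = N - j + 1 then
      if (c : ℕ) = N - j + 1 then -2 * lam N else -1
    else
      let q := j + (p : ℕ) - 1
      if (c : ℕ) = 0 then -1 - tpow r n q i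
      else
        let m := j + (c : ℕ) - 1
        if m < q then -1 - tpow r n q m
        else if m = q then -2 * lam q - 1
        else 0

/-- `L_N^{i,j}(n)` for `j ≤ N`, with the convention `L_N^{i,N+1}(n) = r_i^{2n}`. -/
noncomputable def Ldet (N : ℕ) (lam r : ℕ → ℝ) (n i j : ℕ) : ℝ :=
  if j ≤ N then (Lmat N lam r n i j).det else r i ^ (2 * n)

/-!
By Cramer's rule the `i`-th entry of `v ᵥ* adj M` is the determinant of `M` with row `i`
replaced by `v`; here `v = eᵀ Υ = (r_m^{2n})_m`. Subtracting `r_p^{-2n}` times this row from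
every other row `p` except the last cancels the entries `(r_m / r_p)^{2n}` of `M` above the
diagonal, and turns the entries below and on it into `-1 - t_{p,m}` and `-2λ_p - 1`. The rows
above row `i` are then lower triangular, so the determinant is the product of their diagonal
entries times the determinant of the trailing block from row and column `i` on, and that block
is exactly the matrix defining `L_N^{i,i+1}`.
-/

namespace Matrix

variable {ι R : Type*} [Fintype ι] [DecidableEq ι] [CommRing R]

theorem vecMul_adjugate_apply (A : Matrix ι ι R) (v : ι → R) (j : ι) :
    (v ᵥ* A.adjugate) j = (A.updateRow j v).det := by
  rw [← mulVec_transpose, adjugate_transpose, ← cramer_eq_adjugate_mulVec, cramer_apply,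
    updateCol_transpose, det_transpose]

theorem det_eq_prod_diag_mul_det_of_lowerTriangular_rows {N k : ℕ} (hk : k ≤ N)
    (A : Matrix (Fin N) (Fin N) R) (hA : ∀ q c : Fin N, (q : ℕ) < k → q < c → A q c = 0) :
    A.det = (∏ q : Fin k, A (q.castLE hk) (q.castLE hk)) *
      (A.submatrix (fun p : Fin (N - k) => ⟨k + p, by omega⟩)
        (fun p : Fin (N - k) => ⟨k + p, by omega⟩)).det := by
  set e : Fin k ⊕ Fin (N - k) ≃ Fin N := finSumFinEquiv.trans (finCongr (by omega))
  have hTR : (A.submatrix e e).toBlocks₁₂ = 0 := by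
    ext q p
    exact hA _ _ (by simp [e]) (by simp [e, Fin.lt_def]; omega)
  rw [← det_submatrix_equiv_self e, ← fromBlocks_toBlocks (A.submatrix e e), hTR,
    det_fromBlocks_zero₁₂, det_of_isLowerTriangular]
  · rfl
  · intro q c hqc
    have hqc' := Fin.lt_def.mp (OrderDual.toDual_lt_toDual.mp hqc)
    exact hA _ _ (by simp [e]) (by rw [Fin.lt_def]; simpa [e] using hqc')

end Matrix

theorem Finset.prod_Icc_one_eq_prod_fin {M : Type*} [CommMonoid M] (f : ℕ → M) (k : ℕ) :
    ∏ j ∈ Finset.Icc 1 k, f j = ∏ q : Fin k, f (q + 1) := by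
  rw [← Finset.Ico_add_one_right_eq_Icc, Finset.prod_Ico_eq_prod_range, Nat.add_sub_cancel,
    ← Fin.prod_univ_eq_prod_range]
  simp only [add_comm]

theorem pos_of_succ_lt_of_pos {r : ℕ → ℝ} {N : ℕ}
    (hr : ∀ k, 1 ≤ k → k < N → r (k + 1) < r k) (hrN : 0 < r N) {m : ℕ} (hm : 1 ≤ m) (hmN : m ≤ N) : 0 < r m := by
  revert hm
  induction hmN using Nat.decreasingInduction with
  | self => exact fun _ => hrN
  | of_succ k hk ih => exact fun hk1 => (ih (by omega)).trans (hr k hk1 hk)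

section GPM

variable {N : ℕ} (lam r : ℕ → ℝ) (n : ℕ)

theorem GPM_apply_self (p : Fin N) : GPM N lam r n p p = -2 * lam (p + 1) := by
  simp [GPM]

theorem GPM_apply_of_lt {p c : Fin N} (h : p < c) :
    GPM N lam r n p c = r (c + 1) ^ (2 * n) / r (p + 1) ^ (2 * n) := by
  simp [GPM, h, h.ne, div_pow]

theorem GPM_apply_of_gt {p c : Fin N} (h : c < p) : GPM N lam r n p c = -1 := by
  simp [GPM, h.ne', h.not_gt]

/-- Row `i` is `(r_{c+1}^{2n})_c`; every other row `p` except the last is row `p` of `GPM` minus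
`r_{p+1}^{-2n}` times row `i`. -/
noncomputable def GPMRowReduced (i : Fin N) : Matrix (Fin N) (Fin N) ℝ :=
  of fun p c =>
    if p = i then r (c + 1) ^ (2 * n)
    else if (p : ℕ) + 1 = N then (if p = c then -2 * lam N else -1)
    else if p < c then 0
    else if p = c then -2 * lam (p + 1) - 1
    else -1 - tpow r n (p + 1) (c + 1)

theorem det_updateRow_GPM_eq_det_GPMRowReduced (hr : ∀ p : Fin N, r (p + 1) ≠ 0) (i : Fin N) :
    ((GPM N lam r n).updateRow i fun c => r (c + 1) ^ (2 * n)).det =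
      (GPMRowReduced lam r n i).det := by
  refine (det_eq_of_forall_row_eq_smul_add_const
    (fun p => if p = i ∨ (p : ℕ) + 1 = N then 0 else -(r (p + 1) ^ (2 * n))⁻¹) i
    (by simp) fun p c => ?_).symm
  by_cases hpi : p = i
  · subst hpi; simp [GPMRowReduced]
  by_cases hlast : (p : ℕ) + 1 = N
  · have hcp : c ≤ p := Fin.le_def.mpr (by omega)
    rcases hcp.lt_or_eq with hlt | rfl
    · simp [GPMRowReduced, hpi, hlast, hlt.ne', GPM_apply_of_gt _ _ _ hlt]
    · simp [GPMRowReduced, hpi, hlast, GPM_apply_self]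
  have hrp := pow_ne_zero (2 * n) (hr p)
  simp only [GPMRowReduced, of_apply, updateRow_self, updateRow_ne hpi, hpi, hlast, or_self,
    if_false]
  rcases lt_trichotomy p c with hlt | rfl | hgt
  · rw [if_pos hlt, GPM_apply_of_lt _ _ _ hlt]
    field_simp
    ring
  · rw [if_neg (lt_irrefl p), if_pos rfl, GPM_apply_self]
    field_simp
    ring
  · rw [if_neg hgt.not_gt, if_neg hgt.ne', GPM_apply_of_gt _ _ _ hgt, tpow, div_pow]
    ring

theorem GPMRowReduced_submatrix_eq_Lmat (i : Fin N) (h : (i : ℕ) + 2 ≤ N) :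
    (GPMRowReduced lam r n i).submatrix (fun p : Fin (N - i) => ⟨i + p, by omega⟩)
        (fun p : Fin (N - i) => ⟨i + p, by omega⟩) =
      (Lmat N lam r n (i + 1) (i + 2)).submatrix (finCongr (by omega)) (finCongr (by omega)) := by
  have hsub : ∀ a b : ℕ, a + 2 + b - 1 = a + b + 1 := by omega
  ext p c
  simp only [GPMRowReduced, Lmat, tpow, submatrix_apply, of_apply, finCongr_apply, Fin.val_cast,
    Fin.ext_iff, Fin.lt_def, hsub]
  split_ifs <;> first | omega | (congr <;> omega)

theorem det_GPMRowReduced (i : Fin N) :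
    (GPMRowReduced lam r n i).det =
      (∏ j ∈ Finset.Icc 1 (i : ℕ), (-2 * lam j - 1)) * Ldet N lam r n (i + 1) (i + 2) := by
  have hi : (i : ℕ) ≤ N := i.2.le
  rw [det_eq_prod_diag_mul_det_of_lowerTriangular_rows hi]
  · congr 1
    · rw [Finset.prod_Icc_one_eq_prod_fin]
      refine Finset.prod_congr rfl fun q _ => ?_
      have hqi : q.castLE hi ≠ i := fun h => absurd q.2 (by simp [← h])
      simp [GPMRowReduced, hqi, show (q : ℕ) + 1 ≠ N by omega]
    · by_cases hlast : (i : ℕ) + 2 ≤ N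
      · rw [Ldet, if_pos hlast, GPMRowReduced_submatrix_eq_Lmat lam r n i hlast,
          det_submatrix_equiv_self]
      · have : Subsingleton (Fin (N - i)) := ⟨fun a b => by omega⟩
        rw [Ldet, if_neg hlast, det_eq_elem_of_subsingleton _ ⟨0, by omega⟩]
        simp [GPMRowReduced]
  · intro q c hq hqc
    have hqi : q ≠ i := fun h => by simp [h] at hq
    simp [GPMRowReduced, hqi, hqc, show (q : ℕ) + 1 ≠ N by omega]

end GPM

theorem vecMul_Upsilon_adjugate_GPM_general (N : ℕ) (lam r : ℕ → ℝ)
    (hr : ∀ k, 1 ≤ k → k < N → r (k + 1) < r k) (hrN : 0 < r N)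
    (n : ℕ) :
    ∀ i : Fin N,
      ((fun _ : Fin N => (1 : ℝ)) ᵥ*
          (Matrix.diagonal (fun k : Fin N => r ((k : ℕ) + 1) ^ (2 * n)) *
            (GPM N lam r n).adjugate)) i =
        (∏ j ∈ Finset.Icc 1 (i : ℕ), (-2 * lam j - 1)) *
          Ldet N lam r n ((i : ℕ) + 1) ((i : ℕ) + 2) := by
  intro i
  have hr0 : ∀ p : Fin N, r (p + 1) ≠ 0 := fun p =>
    (pos_of_succ_lt_of_pos hr hrN (by omega) p.2).ne'
  have hrow : (fun _ : Fin N => (1 : ℝ)) ᵥ* diagonal (fun k : Fin N => r (k + 1) ^ (2 * n)) =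
      fun c : Fin N => r (c + 1) ^ (2 * n) := by
    ext c
    simp [vecMul_diagonal]
  rw [← vecMul_vecMul, hrow, vecMul_adjugate_apply,
    det_updateRow_GPM_eq_det_GPMRowReduced lam r n hr0, det_GPMRowReduced]

/-- The `i`-th entry of the row vector `eᵀ Υ_N^{(n)} adj(M_N^{(n)})` equals
`(∏_{j=1}^{i-1} (-2λ_j - 1)) L_N^{i,i+1}(n)`, where `Υ_N^{(n)} = diag(r₁^{2n}, …, r_N^{2n})`. -/
theorem vecMul_Upsilon_adjugate_GPM (N : ℕ) (hN : 1 ≤ N) (lam r : ℕ → ℝ)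
    (hr : ∀ k, 1 ≤ k → k < N → r (k + 1) < r k) (hrN : 0 < r N)
    (n : ℕ) (hn : 0 < n) :
    ∀ i : Fin N,
      ((fun _ : Fin N => (1 : ℝ)) ᵥ*
          (Matrix.diagonal (fun k : Fin N => r ((k : ℕ) + 1) ^ (2 * n)) *
            (GPM N lam r n).adjugate)) i =
        (∏ j ∈ Finset.Icc 1 (i : ℕ), (-2 * lam j - 1)) *
          Ldet N lam r n ((i : ℕ) + 1) ((i : ℕ) + 2) :=
  vecMul_Upsilon_adjugate_GPM_general N lam r hr hrN n
end
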